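/- Let G₁ and G₂ be finite simple graphs of orders n₁, n₂ and sizes m₁, m₂, with minimum degrees δ₁, δ₂. Then ESO(G₁+G₂) ≥ 2√2·m₁·(δ₁+n₂)² + 2√2·m₂·(δ₂+n₁)² + n₁n₂·(δ₁+n₂+δ₂+n₁)·√((δ₁+n₂)² + (δ₂+n₁)²). -/

import Mathlib

/-!
Double counting writes `2 * ESO G` as the sum of `esoWeight (d v) (d w)` over the ordered
adjacent pairs `(v, w)`, and `esoWeight x y = (x + y) * √(x ^ 2 + y ^ 2)` is monotone in both
arguments on `[0, ∞)²`. In `G₁ + G₂` a vertex of `G₁` has degree `d₁ v + n₂ ≥ δ₁ + n₂`, and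
symmetrically for `G₂`. Bounding every pair by `esoWeight` at these lower bounds, the `2 m₁` pairs
inside `G₁`, the `2 m₂` pairs inside `G₂` and the `2 n₁ n₂` pairs across give twice the claimed
bound, since `esoWeight c c = 2 √2 c²`.
-/

open Finset SimpleGraph
open scoped Classical

noncomputable def ESO {V : Type*} [Fintype V] (G : SimpleGraph V) : Real :=
  Finset.sum G.edgeSet.toFinset fun e =>
    Sym2.lift ⟨fun u v => ((G.degree u : Real) + (G.degree v : Real)) *
        Real.sqrt ((G.degree u : Real) ^ 2 + (G.degree v : Real) ^ 2),
      fun u v => by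
        dsimp only; rw [add_comm (G.degree u : Real), add_comm ((G.degree u : Real) ^ 2)]⟩ e

noncomputable def EU {V : Type*} [Fintype V] (G : SimpleGraph V) : Real :=
  Finset.sum G.edgeSet.toFinset fun e =>
    Sym2.lift ⟨fun u v => Real.sqrt ((G.degree u : Real) ^ 2 + (G.degree v : Real) ^ 2 +
        (G.degree u : Real) * (G.degree v : Real)),
      fun u v => by
        dsimp only; rw [mul_comm (G.degree u : Real), add_comm ((G.degree u : Real) ^ 2)]⟩ e

noncomputable def edgeCount {V : Type*} [Fintype V] (G : SimpleGraph V) : Nat :=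
  G.edgeSet.toFinset.card

def graphJoin {V1 V2 : Type*} (G1 : SimpleGraph V1) (G2 : SimpleGraph V2) :
    SimpleGraph (V1 ⊕ V2) where
  Adj x y :=
    match x, y with
    | Sum.inl a, Sum.inl b => G1.Adj a b
    | Sum.inr a, Sum.inr b => G2.Adj a b
    | Sum.inl _, Sum.inr _ => True
    | Sum.inr _, Sum.inl _ => True
  symm := by
    constructor
    rintro (a | a) (b | b) h
    · exact G1.adj_symm h
    · trivial
    · trivial
    · exact G2.adj_symm h
  loopless := by
    constructor
    rintro (a | a) h
    · exact G1.irrefl h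
    · exact G2.irrefl h

namespace SimpleGraph
variable {V : Type*} [Fintype V] (G : SimpleGraph V) [DecidableRel G.Adj]
  {M : Type*} [AddCommMonoid M]

theorem sum_sum_neighborFinset_eq_sum_dart (g : V → V → M) :
    ∑ v, ∑ w ∈ G.neighborFinset v, g v w = ∑ d : G.Dart, g d.fst d.snd := by
  rw [sum_sigma']
  refine sum_bij' (fun x hx ↦ ⟨(x.1, x.2), (G.mem_neighborFinset _ _).1 (mem_sigma.1 hx).2⟩)
    (fun d _ ↦ ⟨d.fst, d.snd⟩) ?_ ?_ ?_ ?_ ?_ <;> simp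

theorem sum_dart_edge_eq_two_nsmul_sum_edgeFinset [DecidableEq V] (f : Sym2 V → M) :
    ∑ d : G.Dart, f d.edge = 2 • ∑ e ∈ G.edgeFinset, f e := by
  rw [← sum_fiberwise_of_maps_to (fun d _ ↦ G.mem_edgeFinset.2 d.edge_mem), smul_sum]
  refine sum_congr rfl fun e he ↦ ?_
  rw [sum_congr rfl fun d hd ↦ congrArg f (mem_filter.1 hd).2, sum_const,
    G.dart_edge_fiber_card e (G.mem_edgeFinset.1 he)]

end SimpleGraph

noncomputable def esoWeight (x y : ℝ) : ℝ := (x + y) * √(x ^ 2 + y ^ 2)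

lemma esoWeight_comm (x y : ℝ) : esoWeight x y = esoWeight y x := by
  rw [esoWeight, esoWeight, add_comm x, add_comm (x ^ 2)]

lemma esoWeight_le_esoWeight {a b x y : ℝ} (ha : 0 ≤ a) (hb : 0 ≤ b) (hx : a ≤ x) (hy : b ≤ y) :
    esoWeight a b ≤ esoWeight x y := by
  unfold esoWeight
  gcongr
  linarith

lemma esoWeight_self {c : ℝ} (hc : 0 ≤ c) : esoWeight c c = 2 * √2 * c ^ 2 := by
  rw [esoWeight, ← two_mul, ← two_mul, Real.sqrt_mul zero_le_two, Real.sqrt_sq hc]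
  ring

lemma two_mul_ESO {V : Type*} [Fintype V] (G : SimpleGraph V) :
    2 * ESO G = ∑ v, ∑ w ∈ G.neighborFinset v, esoWeight (G.degree v) (G.degree w) := by
  rw [G.sum_sum_neighborFinset_eq_sum_dart, two_mul, ← two_nsmul]
  exact (G.sum_dart_edge_eq_two_nsmul_sum_edgeFinset <|
    Sym2.lift ⟨fun u v ↦ esoWeight (G.degree u) (G.degree v), fun _ _ ↦ esoWeight_comm _ _⟩).symm

lemma edgeCount_eq_card_edgeFinset {V : Type*} [Fintype V] (G : SimpleGraph V) :
    edgeCount G = #G.edgeFinset := rfl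

section graphJoin
variable {V1 V2 : Type*} (G1 : SimpleGraph V1) (G2 : SimpleGraph V2)

@[simp] lemma graphJoin_adj_inl_inl (a b : V1) :
    (graphJoin G1 G2).Adj (Sum.inl a) (Sum.inl b) ↔ G1.Adj a b := Iff.rfl

@[simp] lemma graphJoin_adj_inr_inr (a b : V2) :
    (graphJoin G1 G2).Adj (Sum.inr a) (Sum.inr b) ↔ G2.Adj a b := Iff.rfl

@[simp] lemma graphJoin_adj_inl_inr (a : V1) (b : V2) :
    (graphJoin G1 G2).Adj (Sum.inl a) (Sum.inr b) := trivial

@[simp] lemma graphJoin_adj_inr_inl (b : V2) (a : V1) :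
    (graphJoin G1 G2).Adj (Sum.inr b) (Sum.inl a) := trivial

variable [Fintype V1] [Fintype V2]

lemma neighborFinset_graphJoin_inl (a : V1) :
    (graphJoin G1 G2).neighborFinset (Sum.inl a) = (G1.neighborFinset a).disjSum univ := by
  ext (b | b) <;> simp

lemma neighborFinset_graphJoin_inr (b : V2) :
    (graphJoin G1 G2).neighborFinset (Sum.inr b) = univ.disjSum (G2.neighborFinset b) := by
  ext (a | a) <;> simp

lemma degree_graphJoin_inl (a : V1) :
    (graphJoin G1 G2).degree (Sum.inl a) = G1.degree a + Fintype.card V2 := by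
  rw [← card_neighborFinset_eq_degree, neighborFinset_graphJoin_inl, card_disjSum,
    card_neighborFinset_eq_degree, card_univ]

lemma degree_graphJoin_inr (b : V2) :
    (graphJoin G1 G2).degree (Sum.inr b) = Fintype.card V1 + G2.degree b := by
  rw [← card_neighborFinset_eq_degree, neighborFinset_graphJoin_inr, card_disjSum,
    card_neighborFinset_eq_degree, card_univ]

lemma minDegree_add_card_le_degree_graphJoin_inl (a : V1) :
    (G1.minDegree + Fintype.card V2 : ℝ) ≤ (graphJoin G1 G2).degree (Sum.inl a) := by
  rw [degree_graphJoin_inl]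
  exact_mod_cast Nat.add_le_add_right (G1.minDegree_le_degree a) _

lemma minDegree_add_card_le_degree_graphJoin_inr (b : V2) :
    (G2.minDegree + Fintype.card V1 : ℝ) ≤ (graphJoin G1 G2).degree (Sum.inr b) := by
  rw [degree_graphJoin_inr, add_comm]
  exact_mod_cast Nat.add_le_add_left (G2.minDegree_le_degree b) _

lemma degree_mul_add_card_mul_le_sum_graphJoin_inl (a : V1) :
    G1.degree a * esoWeight (G1.minDegree + Fintype.card V2) (G1.minDegree + Fintype.card V2) +
        Fintype.card V2 * esoWeight (G1.minDegree + Fintype.card V2)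
          (G2.minDegree + Fintype.card V1)
      ≤ ∑ w ∈ (graphJoin G1 G2).neighborFinset (Sum.inl a),
          esoWeight ((graphJoin G1 G2).degree (Sum.inl a)) ((graphJoin G1 G2).degree w) := by
  have hd := minDegree_add_card_le_degree_graphJoin_inl G1 G2
  have hd' := minDegree_add_card_le_degree_graphJoin_inr G1 G2
  rw [neighborFinset_graphJoin_inl, sum_disjSum, ← card_neighborFinset_eq_degree, ← card_univ,
    ← nsmul_eq_mul, ← nsmul_eq_mul]
  gcongr
  · exact card_nsmul_le_sum _ _ _ fun b _ ↦
      esoWeight_le_esoWeight (by positivity) (by positivity) (hd a) (hd b)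
  · exact card_nsmul_le_sum _ _ _ fun b _ ↦
      esoWeight_le_esoWeight (by positivity) (by positivity) (hd a) (hd' b)

lemma degree_mul_add_card_mul_le_sum_graphJoin_inr (b : V2) :
    G2.degree b * esoWeight (G2.minDegree + Fintype.card V1) (G2.minDegree + Fintype.card V1) +
        Fintype.card V1 * esoWeight (G2.minDegree + Fintype.card V1)
          (G1.minDegree + Fintype.card V2)
      ≤ ∑ w ∈ (graphJoin G1 G2).neighborFinset (Sum.inr b),
          esoWeight ((graphJoin G1 G2).degree (Sum.inr b)) ((graphJoin G1 G2).degree w) := by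
  have hd := minDegree_add_card_le_degree_graphJoin_inl G1 G2
  have hd' := minDegree_add_card_le_degree_graphJoin_inr G1 G2
  rw [neighborFinset_graphJoin_inr, sum_disjSum, add_comm, ← card_neighborFinset_eq_degree,
    ← card_univ, ← nsmul_eq_mul, ← nsmul_eq_mul]
  gcongr
  · exact card_nsmul_le_sum _ _ _ fun a _ ↦
      esoWeight_le_esoWeight (by positivity) (by positivity) (hd' b) (hd a)
  · exact card_nsmul_le_sum _ _ _ fun b' _ ↦
      esoWeight_le_esoWeight (by positivity) (by positivity) (hd' b) (hd' b')

end graphJoin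

lemma sum_degree_mul_add {V : Type*} [Fintype V] (G : SimpleGraph V) (x y : ℝ) :
    ∑ v, ((G.degree v : ℝ) * x + y) = 2 * edgeCount G * x + Fintype.card V * y := by
  rw [sum_add_distrib, ← sum_mul, ← Nat.cast_sum, sum_degrees_eq_twice_card_edges, sum_const,
    card_univ, nsmul_eq_mul, edgeCount_eq_card_edgeFinset]
  push_cast
  rfl

theorem eso_join_lower {V1 V2 : Type*} [Fintype V1] [Fintype V2]
    (G1 : SimpleGraph V1) (G2 : SimpleGraph V2) :
    2 * Real.sqrt 2 * (edgeCount G1 : Real) * ((G1.minDegree : Real) + Fintype.card V2) ^ 2 +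
      2 * Real.sqrt 2 * (edgeCount G2 : Real) * ((G2.minDegree : Real) + Fintype.card V1) ^ 2 +
      (Fintype.card V1 : Real) * (Fintype.card V2 : Real) *
        ((G1.minDegree : Real) + Fintype.card V2 + (G2.minDegree : Real) + Fintype.card V1) *
        Real.sqrt (((G1.minDegree : Real) + Fintype.card V2) ^ 2 +
          ((G2.minDegree : Real) + Fintype.card V1) ^ 2) ≤ ESO (graphJoin G1 G2) := by
  set c1 : ℝ := G1.minDegree + Fintype.card V2
  set c2 : ℝ := G2.minDegree + Fintype.card V1
  have hc1 : 0 ≤ c1 := by positivity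
  have hc2 : 0 ≤ c2 := by positivity
  have twice_bound :
      2 * edgeCount G1 * esoWeight c1 c1 + Fintype.card V1 * (Fintype.card V2 * esoWeight c1 c2) +
        (2 * edgeCount G2 * esoWeight c2 c2 + Fintype.card V2 * (Fintype.card V1 * esoWeight c2 c1))
      ≤ 2 * ESO (graphJoin G1 G2) := by
    rw [two_mul_ESO, Fintype.sum_sum_type, ← sum_degree_mul_add, ← sum_degree_mul_add]
    exact add_le_add (sum_le_sum fun a _ ↦ degree_mul_add_card_mul_le_sum_graphJoin_inl G1 G2 a)
      (sum_le_sum fun b _ ↦ degree_mul_add_card_mul_le_sum_graphJoin_inr G1 G2 b)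
  rw [esoWeight_comm c2 c1, esoWeight_self hc1, esoWeight_self hc2, esoWeight] at twice_bound
  rw [add_assoc c1]
  linarith
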